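/- Let (V⁴, g) be an oriented four-dimensional Euclidean vector space with algebraic Weyl tensor W = W⁺ + W⁻. Let {ω_k⁺} and {ω_k⁻} be orthogonal eigenbases of W⁺ on Λ⁺ and W⁻ on Λ⁻ with eigenvalues λ_k⁺, λ_k⁻, associated to almost complex structures J_k⁺, J_k⁻. Then for the symmetric involutions σ_{i,j} = J_i⁺ J_j⁻, the extension of W to symmetric endomorphisms satisfies W(σ_{i,j}) = (λ_i⁺ + λ_j⁻) σ_{i,j} for all 1 ≤ i, j ≤ 3. -/

import Mathlib

/- Common setup: algebraic Weyl curvature tensors on a Euclidean vector space. -/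

open scoped RealInnerProductSpace
open Finset

/-- A curvature-type 4-linear tensor on `V`. -/
abbrev Tensor4 (V : Type*) [NormedAddCommGroup V] [InnerProductSpace ℝ V] : Type _ :=
  V →ₗ[ℝ] V →ₗ[ℝ] V →ₗ[ℝ] V →ₗ[ℝ] ℝ

variable {V : Type*} [NormedAddCommGroup V] [InnerProductSpace ℝ V] [FiniteDimensional ℝ V]

/-- `W` is an algebraic Weyl curvature tensor: it has the symmetries of a curvature
tensor, satisfies the first Bianchi identity, and is totally trace-free. -/
structure IsWeylTensor (W : Tensor4 V) : Prop where
  antisym₁ : ∀ x y z u, W x y z u = - W y x z u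
  antisym₂ : ∀ x y z u, W x y z u = - W x y u z
  pair_symm : ∀ x y z u, W x y z u = W z u x y
  bianchi : ∀ x y z u, W x y z u + W y z x u + W z x y u = 0
  trace_free : ∀ (b : OrthonormalBasis (Fin (Module.finrank ℝ V)) ℝ V) (x y : V),
      ∑ i, W x (b i) y (b i) = 0

/-- The extension of `W` to endomorphisms, `W(h) = Σᵢ W(eᵢ, ·, h eᵢ, ·)`,
viewed as a bilinear form (identified with an endomorphism via the metric). -/
noncomputable def weylExt {ι : Type*} [Fintype ι]
    (W : Tensor4 V) (b : OrthonormalBasis ι ℝ V) (h : V →ₗ[ℝ] V) (v w : V) : ℝ :=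
  ∑ i, W (b i) v (h (b i)) w

/-- The space `E_W`: endomorphisms `h` with `W(x,y,hz,·) + W(y,z,hx,·) + W(z,x,hy,·) = 0`. -/
def memE (W : Tensor4 V) (h : V →ₗ[ℝ] V) : Prop :=
  ∀ x y z u, W x y (h z) u + W y z (h x) u + W z x (h y) u = 0

/-- The Lie algebra `g_W` of the symmetry group of `W`. -/
def memG (W : Tensor4 V) (h : V →ₗ[ℝ] V) : Prop :=
  ∀ x y z u, W (h x) y z u + W x (h y) z u + W x y (h z) u + W x y z (h u) = 0

/-- Skew-symmetric endomorphisms (identified with 2-forms). -/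
def IsSkew (F : V →ₗ[ℝ] V) : Prop := ∀ v w, ⟪F v, w⟫ = - ⟪v, F w⟫

/-- Symmetric endomorphisms. -/
def IsSym (F : V →ₗ[ℝ] V) : Prop := ∀ v w, ⟪F v, w⟫ = ⟪v, F w⟫

/-- The bilinear form `g(F·,·)` associated to an endomorphism `F`. -/
noncomputable def form (F : V →ₗ[ℝ] V) (v w : V) : ℝ := ⟪F v, w⟫

/- Four-dimensional setup: (anti-)self-duality of 2-forms with respect to the orientation
determined by a positively oriented orthonormal basis `e` of `V⁴`. -/

/-- A 2-form `α` is self-dual with respect to the oriented orthonormal basis `e`. -/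
def SelfDual (e : OrthonormalBasis (Fin 4) ℝ V) (α : V → V → ℝ) : Prop :=
  α (e 0) (e 1) = α (e 2) (e 3) ∧ α (e 0) (e 2) = α (e 3) (e 1) ∧
    α (e 0) (e 3) = α (e 1) (e 2)

/-- A 2-form `α` is anti-self-dual with respect to the oriented orthonormal basis `e`. -/
def AntiSelfDual (e : OrthonormalBasis (Fin 4) ℝ V) (α : V → V → ℝ) : Prop :=
  α (e 0) (e 1) = - α (e 2) (e 3) ∧ α (e 0) (e 2) = - α (e 3) (e 1) ∧
    α (e 0) (e 3) = - α (e 1) (e 2)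

/-!
The six complex structures `J_a ∈ {J_k⁺, J_k⁻}` are pairwise orthogonal for the Hilbert–Schmidt
product: for any two of them a third one anticommutes with their product, whose trace therefore
vanishes. Expanding `x ∧ y` in this basis and using `W(x ∧ y) = W(x, y, ·, ·)` (first Bianchi
identity) gives the spectral decomposition `4 W = 2 Σ_a λ_a ω_a ⊗ ω_a`. Consequently, if
`J_a h = ε_a h J_a` for all `a`, then `W(h) = ½ (Σ_a ε_a λ_a) h`. For `h = id` trace-freeness gives
`Σ_a λ_a = 0`; for `h = σ_{i,j}` the sign `ε_a` is `+1` exactly at `J_i⁺` and `J_j⁻`, so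
`W(σ_{i,j}) = ½ (2 λ_i⁺ + 2 λ_j⁻ - Σ_a λ_a) σ_{i,j}`.
-/

namespace OrthonormalBasis

variable {ι E M : Type*} [Fintype ι] [NormedAddCommGroup E] [InnerProductSpace ℝ E]
  [AddCommMonoid M] [Module ℝ M]

lemma sum_inner_smul_apply (b : OrthonormalBasis ι ℝ E) (f : E →ₗ[ℝ] M) (x : E) :
    ∑ i, ⟪x, b i⟫ • f (b i) = f x := by
  simp_rw [← map_smul, ← map_sum, ← real_inner_comm x, b.sum_repr']

lemma sum_inner_mul_apply (b : OrthonormalBasis ι ℝ E) (f : E →ₗ[ℝ] ℝ) (x : E) :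
    ∑ i, ⟪x, b i⟫ * f (b i) = f x :=
  b.sum_inner_smul_apply f x

end OrthonormalBasis

section Commutation

variable {R M : Type*} [Field R] [AddCommGroup M] [Module R M]

lemma LinearMap.comp_comp_eq_smul {A B C : M →ₗ[R] M} {s t : R}
    (hB : A ∘ₗ B = s • (B ∘ₗ A)) (hC : A ∘ₗ C = t • (C ∘ₗ A)) :
    A ∘ₗ (B ∘ₗ C) = (s * t) • ((B ∘ₗ C) ∘ₗ A) := by
  rw [← LinearMap.comp_assoc, hB, LinearMap.smul_comp, LinearMap.comp_assoc, hC,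
    LinearMap.comp_smul, ← LinearMap.comp_assoc, smul_smul]

lemma LinearMap.comp_eq_ite_smul {κ : Type*} [DecidableEq κ] {J : κ → M →ₗ[R] M}
    (hanti : ∀ k l, k ≠ l → J k ∘ₗ J l = -(J l ∘ₗ J k)) (k l : κ) :
    J k ∘ₗ J l = (if k = l then (1 : R) else -1) • (J l ∘ₗ J k) := by
  split_ifs with h
  · rw [h, one_smul]
  · rw [hanti k l h, neg_one_smul]

variable [CharZero R] [FiniteDimensional R M]

lemma LinearMap.trace_eq_zero_of_comp_eq_neg {T K : M →ₗ[R] M}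
    (hK : K ∘ₗ K = -LinearMap.id) (hKT : K ∘ₗ T = -(T ∘ₗ K)) :
    LinearMap.trace R M T = 0 := by
  have h : LinearMap.trace R M ((T ∘ₗ K) ∘ₗ K) = LinearMap.trace R M (K ∘ₗ (T ∘ₗ K)) :=
    LinearMap.trace_comp_comm' _ _
  rw [← LinearMap.comp_assoc K T K, hKT] at h
  simp only [LinearMap.neg_comp, LinearMap.comp_assoc, hK, LinearMap.comp_neg,
    LinearMap.comp_id, map_neg, neg_neg] at h
  exact neg_eq_self.mp h

lemma LinearMap.trace_comp_eq_zero_of_comp_eq_smul {A B K : M →ₗ[R] M} {s t : R}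
    (hK : K ∘ₗ K = -LinearMap.id) (hA : K ∘ₗ A = s • (A ∘ₗ K)) (hB : K ∘ₗ B = t • (B ∘ₗ K))
    (hst : s * t = -1) : LinearMap.trace R M (A ∘ₗ B) = 0 :=
  LinearMap.trace_eq_zero_of_comp_eq_neg hK <| by
    rw [LinearMap.comp_comp_eq_smul hA hB, hst, neg_one_smul]

lemma LinearMap.trace_sumElim_comp_eq_zero {κ : Type*} [DecidableEq κ] [Nontrivial κ]
    {P Q : κ → M →ₗ[R] M} (hPP : ∀ k, P k ∘ₗ P k = -LinearMap.id)
    (hQQ : ∀ k, Q k ∘ₗ Q k = -LinearMap.id)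
    (hP : ∀ k l, k ≠ l → P k ∘ₗ P l = -(P l ∘ₗ P k))
    (hQ : ∀ k l, k ≠ l → Q k ∘ₗ Q l = -(Q l ∘ₗ Q k))
    (hPQ : ∀ k l, P k ∘ₗ Q l = Q l ∘ₗ P k) {a a' : κ ⊕ κ} (h : a ≠ a') :
    LinearMap.trace R M (Sum.elim P Q a ∘ₗ Sum.elim P Q a') = 0 := by
  have hP' := LinearMap.comp_eq_ite_smul hP
  have hQ' := LinearMap.comp_eq_ite_smul hQ
  have hPQ' : ∀ k l, P k ∘ₗ Q l = (1 : R) • (Q l ∘ₗ P k) := fun k l => by rw [one_smul, hPQ]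
  have hQP' : ∀ k l, Q l ∘ₗ P k = (1 : R) • (P k ∘ₗ Q l) := fun k l => by rw [one_smul, hPQ]
  rcases a with k | k <;> rcases a' with l | l
  · have hkl : k ≠ l := Sum.inl_injective.ne_iff.mp h
    exact trace_comp_eq_zero_of_comp_eq_smul (hPP k) (hP' k k) (hP' k l) (by simp [hkl])
  · obtain ⟨k', hk'⟩ := exists_ne k
    exact trace_comp_eq_zero_of_comp_eq_smul (hPP k') (hP' k' k) (hPQ' k' l) (by simp [hk'])
  · obtain ⟨k', hk'⟩ := exists_ne k
    exact trace_comp_eq_zero_of_comp_eq_smul (hQQ k') (hQ' k' k) (hQP' l k') (by simp [hk'])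
  · have hkl : k ≠ l := Sum.inr_injective.ne_iff.mp h
    exact trace_comp_eq_zero_of_comp_eq_smul (hQQ k) (hQ' k k) (hQ' k l) (by simp [hkl])

end Commutation

lemma Fintype.sum_mul_ite_one_neg_one {κ R : Type*} [Fintype κ] [DecidableEq κ] [CommRing R]
    (f : κ → R) (t : κ) :
    ∑ k, f k * (if k = t then 1 else -1) = 2 * f t - ∑ k, f k := by
  have h : ∀ k, f k * (if k = t then 1 else -1) = 2 * (if k = t then f k else 0) - f k := by
    intro k
    split_ifs <;> ring
  simp_rw [h, Finset.sum_sub_distrib, ← Finset.mul_sum, Finset.sum_ite_eq', Finset.mem_univ,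
    if_true]

section

variable {E : Type*} [NormedAddCommGroup E] [InnerProductSpace ℝ E]

lemma isSkew_of_inner_map_map_of_comp_self {J : E →ₗ[ℝ] E}
    (hJ : ∀ v w, ⟪J v, J w⟫ = ⟪v, w⟫) (hJJ : J ∘ₗ J = -LinearMap.id) : IsSkew J := by
  intro v w
  have hw : J (J w) = -w := by simpa using LinearMap.congr_fun hJJ w
  rw [← hJ v (J w), hw, inner_neg_right, neg_neg]

lemma IsSkew.inner_map_left {F : E →ₗ[ℝ] E} (hF : IsSkew F) (v w : E) :
    ⟪F v, w⟫ = -⟪F w, v⟫ := by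
  rw [hF, real_inner_comm]

lemma IsSkew.sum_inner_map_map {ι : Type*} [Fintype ι] {A : E →ₗ[ℝ] E} (hA : IsSkew A)
    (B : E →ₗ[ℝ] E) (b : OrthonormalBasis ι ℝ E) :
    ∑ i, ⟪A (b i), B (b i)⟫ = -LinearMap.trace ℝ E (A ∘ₗ B) := by
  rw [LinearMap.trace_eq_sum_inner _ b, ← Finset.sum_neg_distrib]
  exact Finset.sum_congr rfl fun i _ => hA _ _

lemma IsSkew.sum_inner_map_mul_inner_map {ι : Type*} [Fintype ι] (b : OrthonormalBasis ι ℝ E)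
    {J h : E →ₗ[ℝ] E} {ε : ℝ} (hJ : IsSkew J) (hJJ : J ∘ₗ J = -LinearMap.id)
    (hε : J ∘ₗ h = ε • (h ∘ₗ J)) (v w : E) :
    ∑ i, ⟪J (b i), v⟫ * ⟪J (h (b i)), w⟫ = ε * ⟪h v, w⟫ := by
  have hexp : ∑ i, ⟪J v, b i⟫ * ⟪w, J (h (b i))⟫ = ⟪w, J (h (J v))⟫ :=
    b.sum_inner_mul_apply ((innerₛₗ ℝ w) ∘ₗ J ∘ₗ h) (J v)
  have hJhJ : J (h (J v)) = -(ε • h v) := by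
    have hJJv : J (J v) = -v := by simpa using LinearMap.congr_fun hJJ v
    simpa [hJJv] using LinearMap.congr_fun hε (J v)
  calc ∑ i, ⟪J (b i), v⟫ * ⟪J (h (b i)), w⟫
      = -∑ i, ⟪J v, b i⟫ * ⟪w, J (h (b i))⟫ := by
        rw [← Finset.sum_neg_distrib]
        refine Finset.sum_congr rfl fun i _ => ?_
        rw [hJ.inner_map_left, real_inner_comm w]
        ring
    _ = ε * ⟪h v, w⟫ := by
        rw [hexp, hJhJ, inner_neg_right, neg_neg, real_inner_smul_right, real_inner_comm]

noncomputable def wedge (x y : E) : E →ₗ[ℝ] E :=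
  (innerₛₗ ℝ x).smulRight y - (innerₛₗ ℝ y).smulRight x

@[simp]
lemma wedge_apply (x y z : E) : wedge x y z = ⟪x, z⟫ • y - ⟪y, z⟫ • x := by
  simp [wedge]

lemma isSkew_wedge (x y : E) : IsSkew (wedge x y) := by
  intro v w
  simp only [wedge_apply, inner_sub_left, inner_sub_right, real_inner_smul_right,
    real_inner_comm]
  ring

lemma sum_inner_wedge_map {ι : Type*} [Fintype ι] (b : OrthonormalBasis ι ℝ E)
    {J : E →ₗ[ℝ] E} (hJ : IsSkew J) (x y : E) :
    ∑ i, ⟪wedge x y (b i), J (b i)⟫ = 2 * ⟪J x, y⟫ := by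
  have hx := b.sum_inner_mul_apply ((innerₛₗ ℝ y).comp J) x
  have hy := b.sum_inner_mul_apply ((innerₛₗ ℝ x).comp J) y
  simp only [LinearMap.comp_apply, innerₛₗ_apply_apply] at hx hy
  simp only [wedge_apply, inner_sub_left, real_inner_smul_left, Finset.sum_sub_distrib, hx, hy]
  rw [real_inner_comm (J x) y, hJ x y]
  ring

variable {ι κ : Type*} [Fintype ι] [Fintype κ] {W : Tensor4 E}

lemma weylExt_sum_smul (b : OrthonormalBasis ι ℝ E) (c : κ → ℝ) (J : κ → E →ₗ[ℝ] E) (v w : E) :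
    weylExt W b (∑ a, c a • J a) v w = ∑ a, c a * weylExt W b (J a) v w := by
  simp only [weylExt, LinearMap.sum_apply, LinearMap.smul_apply, map_sum, map_smul, smul_eq_mul,
    Finset.mul_sum]
  exact Finset.sum_comm

namespace IsWeylTensor

variable (hW : IsWeylTensor W) (b : OrthonormalBasis ι ℝ E)
include hW

lemma weylExt_wedge (x y v w : E) : weylExt W b (wedge x y) v w = W x y v w := by
  have hexp : ∀ z u, ∑ i, ⟪z, b i⟫ * W (b i) v u w = W z v u w := fun z u => by
    simpa using LinearMap.congr_fun (LinearMap.congr_fun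
      (LinearMap.congr_fun (b.sum_inner_smul_apply W z) v) u) w
  simp only [weylExt, wedge_apply, map_sub, map_smul, LinearMap.sub_apply, LinearMap.smul_apply,
    smul_eq_mul, Finset.sum_sub_distrib, hexp]
  linarith [hW.bianchi x v y w, hW.antisym₁ v y x w, hW.antisym₁ y x v w]

lemma weylExt_id (v w : E) : weylExt W b LinearMap.id v w = 0 := by
  let σ : ι ≃ Fin (Module.finrank ℝ E) :=
    Fintype.equivFinOfCardEq (Module.finrank_eq_card_basis b.toBasis).symm
  have h := hW.trace_free (b.reindex σ) v w
  simp only [OrthonormalBasis.reindex_apply] at h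
  rw [Equiv.sum_comp σ.symm (fun i => W v (b i) w (b i))] at h
  simp only [weylExt, LinearMap.id_apply]
  rw [← h]
  exact Finset.sum_congr rfl fun i _ => by rw [hW.antisym₁, hW.antisym₂, neg_neg]

end IsWeylTensor

structure IsEigenbasisOfComplexStructures (W : Tensor4 E) (b : OrthonormalBasis ι ℝ E)
    (J : κ → E →ₗ[ℝ] E) (μ : κ → ℝ) : Prop where
  inner_map_map : ∀ a v w, ⟪J a v, J a w⟫ = ⟪v, w⟫
  comp_self : ∀ a, J a ∘ₗ J a = -LinearMap.id
  -- for skew maps, `-trace (A ∘ B)` is the Hilbert–Schmidt inner product of `A` and `B`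
  trace_comp_eq_zero : ∀ a a', a ≠ a' → LinearMap.trace ℝ E (J a ∘ₗ J a') = 0
  exists_eq_sum_smul : ∀ F, IsSkew F → ∃ c : κ → ℝ, F = ∑ a, c a • J a
  weylExt_eq : ∀ a v w, weylExt W b (J a) v w = μ a * form (J a) v w

namespace IsEigenbasisOfComplexStructures

variable {b : OrthonormalBasis ι ℝ E} {J : κ → E →ₗ[ℝ] E} {μ : κ → ℝ}
  (hJ : IsEigenbasisOfComplexStructures W b J μ)
include hJ

lemma isSkew (a : κ) : IsSkew (J a) :=
  isSkew_of_inner_map_map_of_comp_self (hJ.inner_map_map a) (hJ.comp_self a)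

lemma card_mul_coeff {F : E →ₗ[ℝ] E} {c : κ → ℝ} (hF : F = ∑ a, c a • J a) (a : κ) :
    Fintype.card ι * c a = ∑ i, ⟪F (b i), J a (b i)⟫ := by
  classical
  simp only [hF, LinearMap.sum_apply, LinearMap.smul_apply, sum_inner, real_inner_smul_left]
  rw [Finset.sum_comm]
  simp_rw [← Finset.mul_sum]
  rw [Finset.sum_eq_single a]
  · simp_rw [hJ.inner_map_map, b.inner_eq_one]
    simp [mul_comm]
  · intro a' _ ha'
    rw [(hJ.isSkew a').sum_inner_map_map, hJ.trace_comp_eq_zero a' a ha', neg_zero, mul_zero]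
  · simp

lemma card_mul_apply (hW : IsWeylTensor W) (x y v w : E) :
    Fintype.card ι * W x y v w = 2 * ∑ a, μ a * (⟪J a x, y⟫ * ⟪J a v, w⟫) := by
  obtain ⟨c, hc⟩ := hJ.exists_eq_sum_smul _ (isSkew_wedge x y)
  have hcoeff : ∀ a, Fintype.card ι * c a = 2 * ⟪J a x, y⟫ := fun a => by
    rw [hJ.card_mul_coeff hc, sum_inner_wedge_map b (hJ.isSkew a)]
  rw [← hW.weylExt_wedge b, hc, weylExt_sum_smul, Finset.mul_sum, Finset.mul_sum]
  refine Finset.sum_congr rfl fun a _ => ?_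
  rw [hJ.weylExt_eq, form, ← mul_assoc, hcoeff]
  ring

lemma card_mul_weylExt (hW : IsWeylTensor W) {h : E →ₗ[ℝ] E} {ε : κ → ℝ}
    (hε : ∀ a, J a ∘ₗ h = ε a • (h ∘ₗ J a)) (v w : E) :
    Fintype.card ι * weylExt W b h v w = 2 * (∑ a, μ a * ε a) * ⟪h v, w⟫ := by
  rw [weylExt, Finset.mul_sum]
  simp_rw [hJ.card_mul_apply hW, ← Finset.mul_sum]
  rw [Finset.sum_comm]
  simp_rw [← Finset.mul_sum, (hJ.isSkew _).sum_inner_map_mul_inner_map b (hJ.comp_self _) (hε _)]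
  rw [mul_assoc, Finset.sum_mul]
  simp_rw [mul_assoc]

lemma sum_eq_zero (hW : IsWeylTensor W) [Nonempty ι] : ∑ a, μ a = 0 := by
  obtain ⟨i⟩ := ‹Nonempty ι›
  have h := hJ.card_mul_weylExt hW (h := LinearMap.id) (ε := 1) (by simp) (b i) (b i)
  simpa [hW.weylExt_id, b.inner_eq_one] using h

end IsEigenbasisOfComplexStructures

end

theorem stmt13 (e : OrthonormalBasis (Fin 4) ℝ V)
    (W : Tensor4 V) (hW : IsWeylTensor W)
    (Jp Jm : Fin 3 → (V →ₗ[ℝ] V)) (lp lm : Fin 3 → ℝ)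
    -- the `J_k±` are g-compatible almost complex structures
    (hporth : ∀ k (v w : V), ⟪Jp k v, Jp k w⟫ = ⟪v, w⟫)
    (hmorth : ∀ k (v w : V), ⟪Jm k v, Jm k w⟫ = ⟪v, w⟫)
    (hpsq : ∀ k, Jp k ∘ₗ Jp k = -LinearMap.id)
    (hmsq : ∀ k, Jm k ∘ₗ Jm k = -LinearMap.id)
    -- quaternion relations within each family
    (hpanti : ∀ k l, k ≠ l → Jp k ∘ₗ Jp l = -(Jp l ∘ₗ Jp k))
    (hmanti : ∀ k l, k ≠ l → Jm k ∘ₗ Jm l = -(Jm l ∘ₗ Jm k))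
    -- the two families commute
    (hcomm : ∀ k l, Jp k ∘ₗ Jm l = Jm l ∘ₗ Jp k)
    -- together they form a basis of the 2-forms
    (hspan : ∀ F : V →ₗ[ℝ] V, IsSkew F →
      ∃ c d : Fin 3 → ℝ, F = (∑ k, c k • Jp k) + ∑ k, d k • Jm k)
    -- eigenform equations `W(ω_k±) = λ_k± ω_k±`
    (heigp : ∀ k v w, weylExt W e (Jp k) v w = lp k * form (Jp k) v w)
    (heigm : ∀ k v w, weylExt W e (Jm k) v w = lm k * form (Jm k) v w) :
    ∀ i j v w, weylExt W e (Jp i ∘ₗ Jm j) v w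
        = (lp i + lm j) * form (Jp i ∘ₗ Jm j) v w := by
  have hJ : IsEigenbasisOfComplexStructures W e (Sum.elim Jp Jm) (Sum.elim lp lm) :=
    { inner_map_map := by rintro (k | k); exacts [hporth k, hmorth k]
      comp_self := by rintro (k | k); exacts [hpsq k, hmsq k]
      trace_comp_eq_zero := fun _ _ =>
        LinearMap.trace_sumElim_comp_eq_zero hpsq hmsq hpanti hmanti hcomm
      exists_eq_sum_smul := fun F hF => by
        obtain ⟨c, d, rfl⟩ := hspan F hF
        exact ⟨Sum.elim c d, by simp [Fintype.sum_sum_type]⟩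
      weylExt_eq := by rintro (k | k); exacts [heigp k, heigm k] }
  intro i j v w
  have hε : ∀ a, Sum.elim Jp Jm a ∘ₗ (Jp i ∘ₗ Jm j) =
      Sum.elim (fun k => if k = i then (1 : ℝ) else -1) (fun k => if k = j then 1 else -1) a •
        ((Jp i ∘ₗ Jm j) ∘ₗ Sum.elim Jp Jm a) := by
    rintro (k | k)
    · simpa using LinearMap.comp_comp_eq_smul (LinearMap.comp_eq_ite_smul hpanti k i)
        (t := (1 : ℝ)) (by rw [one_smul, hcomm])
    · simpa using LinearMap.comp_comp_eq_smul (s := (1 : ℝ)) (by rw [one_smul, hcomm])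
        (LinearMap.comp_eq_ite_smul hmanti k j)
  have hweyl := hJ.card_mul_weylExt hW hε v w
  have hsum := hJ.sum_eq_zero hW
  simp only [Fintype.sum_sum_type, Sum.elim_inl, Sum.elim_inr, Fintype.sum_mul_ite_one_neg_one,
    Fintype.card_fin] at hweyl hsum
  rw [form]
  linear_combination hweyl / 4 - ⟪(Jp i ∘ₗ Jm j) v, w⟫ / 2 * hsum
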